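/- arXiv:0812.2673 — 3 statements merged into one kernel-verified Lean document; each statement's English description precedes it below -/
import Mathlib

section
/- Let u be a harmonic function on a neighborhood of the closed disc B̄(a, R) in ℂ, with u ≥ 0 on B̄(a, R). Suppose u(z₁) = 0 for some point z₁ with |z₁ − a| = R. Then |∇u(z₁)| ≥ u(a)/(2R). -/
/-!
By the Poisson formula, the lower bound `(R - r) / (R + r)` for the Poisson kernel of `B(a, R)`
at a point `w` with `‖w - a‖ = r`, and the mean value property, a harmonic `u ≥ 0` satisfies
Harnack's inequality `u w ≥ (R - r) / (R + r) * u a`. On the radius `w = z₁ + τ (a - z₁)` this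
reads `u w ≥ τ / (2 - τ) * u a ≥ τ * u a / 2`; since `u z₁ = 0`, the derivative of `u` at `z₁`
in the direction `a - z₁`, of length `R`, is at least `u a / 2`.
-/

open Metric Set InnerProductSpace

theorem harmonicOnNhd_of_contDiffOn_of_second_partials_sum_eq_zero {F : Type*}
    [NormedAddCommGroup F] [NormedSpace ℝ F] {u : ℂ → F} {U : Set ℂ} (hU : IsOpen U)
    (hu : ContDiffOn ℝ 2 u U)
    (hΔ : ∀ z ∈ U, fderiv ℝ (fun w => fderiv ℝ u w 1) z 1 +
        fderiv ℝ (fun w => fderiv ℝ u w Complex.I) z Complex.I = 0) :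
    HarmonicOnNhd u U := by
  intro z hz
  refine ⟨hu.contDiffAt (hU.mem_nhds hz), ?_⟩
  filter_upwards [hU.mem_nhds hz] with w hw
  have hDu : DifferentiableAt ℝ (fderiv ℝ u) w :=
    ((hu.fderiv_of_isOpen hU (by norm_num)).differentiableOn one_ne_zero).differentiableAt
      (hU.mem_nhds hw)
  have hdir (v : ℂ) :
      fderiv ℝ (fun y => fderiv ℝ u y v) w v = fderiv ℝ (fderiv ℝ u) w v v := by
    rw [fderiv_clm_apply hDu (differentiableAt_const v)]
    simp
  simpa [laplacian_eq_iteratedFDeriv_complexPlane, iteratedFDeriv_two_apply, hdir] using hΔ w hw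

theorem InnerProductSpace.HarmonicOnNhd.harnack_lower_bound {u : ℂ → ℝ} {c w : ℂ} {R : ℝ}
    (hu : HarmonicOnNhd u (closedBall c R)) (hnonneg : ∀ z ∈ sphere c R, 0 ≤ u z)
    (hw : w ∈ ball c R) :
    (R - ‖w - c‖) / (R + ‖w - c‖) * u c ≤ u w := by
  have hR : |R| = R := abs_of_pos (pos_of_mem_ball hw)
  have hu' : HarmonicOnNhd u (closedBall c |R|) := by rwa [hR]
  have hcont : ContinuousOn u (sphere c |R|) :=
    hu'.continuousOn.mono sphere_subset_closedBall
  have hkernel : ContinuousOn (poissonKernel c w) (sphere c |R|) := by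
    rw [poissonKernel_eq_re_herglotzRieszKernel]
    exact Complex.continuous_re.comp_continuousOn (continuousOn_herglotzRieszKernel_sphere hw)
  calc (R - ‖w - c‖) / (R + ‖w - c‖) * u c
      = Real.circleAverage (((R - ‖w - c‖) / (R + ‖w - c‖)) • u) c R := by
        rw [Real.circleAverage_smul, hu'.circleAverage_eq, smul_eq_mul]
    _ ≤ Real.circleAverage (poissonKernel c w • u) c R := by
        refine Real.circleAverage_mono (continuousOn_const.mul hcont).circleIntegrable'
          (hkernel.smul hcont).circleIntegrable' fun z hz => ?_
        rw [hR] at hz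
        simp only [Pi.smul_apply, smul_eq_mul]
        refine mul_le_mul_of_nonneg_right ?_ (hnonneg z hz)
        rw [poissonKernel_eq_re_herglotzRieszKernel]
        exact le_re_herglotzRieszKernel hz hw
    _ = u w := hu.circleAverage_poissonKernel_smul hw

theorem InnerProductSpace.HarmonicOnNhd.half_center_mul_le_on_radius {u : ℂ → ℝ} {c z : ℂ}
    {R τ : ℝ} (hR : 0 < R) (hu : HarmonicOnNhd u (closedBall c R))
    (hnonneg : ∀ w ∈ closedBall c R, 0 ≤ u w) (hz : ‖z - c‖ = R) (hτ : τ ∈ Ioo 0 1) :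
    u c / 2 * τ ≤ u (z + τ • (c - z)) := by
  obtain ⟨hτ₀, hτ₁⟩ := hτ
  have hdist : ‖z + τ • (c - z) - c‖ = (1 - τ) * R := by
    rw [show z + τ • (c - z) - c = (1 - τ) • (z - c) by module, norm_smul, hz,
      Real.norm_of_nonneg (by linarith)]
  have hmem : z + τ • (c - z) ∈ ball c R := by
    rw [mem_ball_iff_norm, hdist]; nlinarith
  have hharnack := hu.harnack_lower_bound (fun w hw => hnonneg w (sphere_subset_closedBall hw)) hmem
  rw [hdist] at hharnack
  have hratio : τ / 2 ≤ (R - (1 - τ) * R) / (R + (1 - τ) * R) := by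
    rw [div_le_div_iff₀ two_pos (by nlinarith)]; nlinarith [mul_pos (mul_pos hτ₀ hτ₀) hR]
  calc u c / 2 * τ = τ / 2 * u c := by ring
    _ ≤ (R - (1 - τ) * R) / (R + (1 - τ) * R) * u c := by
      gcongr; exact hnonneg c (mem_closedBall_self hR.le)
    _ ≤ _ := hharnack

theorem le_fderiv_apply_of_forall_mul_le_of_eq_zero {E : Type*}
    [NormedAddCommGroup E] [NormedSpace ℝ E] {f : E → ℝ} {x v : E} {c : ℝ}
    (hf : DifferentiableAt ℝ f x) (hx : f x = 0)
    (h : ∀ τ ∈ Ioo (0 : ℝ) 1, c * τ ≤ f (x + τ • v)) : c ≤ fderiv ℝ f x v := by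
  refine ge_of_tendsto (hf.hasFDerivAt.hasLineDerivAt v).tendsto_slope_zero_right ?_
  filter_upwards [Ioo_mem_nhdsGT (zero_lt_one' ℝ)] with τ hτ
  rw [hx, sub_zero, smul_eq_mul, inv_mul_eq_div, le_div_iff₀ hτ.1]
  exact h τ hτ

/-- Lemma 1: if `u` is harmonic (twice continuously differentiable with `Δu = 0`)
on a neighborhood `U` of the closed disc `B̄(a,R)`, nonnegative on `B̄(a,R)`,
and vanishes at a boundary point `z₁`, then `|∇u(z₁)| ≥ u(a)/(2R)`. -/
theorem gradient_lower_bound_at_boundary_zero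
    (a : ℂ) (R : ℝ) (hR : 0 < R) (U : Set ℂ) (hU : IsOpen U)
    (hBU : Metric.closedBall a R ⊆ U)
    (u : ℂ → ℝ) (hC2 : ContDiffOn ℝ 2 u U)
    (hharm : ∀ z ∈ U,
      fderiv ℝ (fun w => fderiv ℝ u w 1) z 1 +
        fderiv ℝ (fun w => fderiv ℝ u w Complex.I) z Complex.I = 0)
    (hpos : ∀ z ∈ Metric.closedBall a R, 0 ≤ u z)
    (z₁ : ℂ) (hz₁ : ‖z₁ - a‖ = R) (huz₁ : u z₁ = 0) :
    u a / (2 * R) ≤ ‖fderiv ℝ u z₁‖ := by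
  have hu : HarmonicOnNhd u (closedBall a R) :=
    (harmonicOnNhd_of_contDiffOn_of_second_partials_sum_eq_zero hU hC2 hharm).mono hBU
  have hdiff : DifferentiableAt ℝ u z₁ :=
    (hC2.contDiffAt (hU.mem_nhds (hBU (mem_closedBall_iff_norm.2 hz₁.le)))).differentiableAt
      two_ne_zero
  calc u a / (2 * R) = u a / 2 / R := by rw [div_div]
    _ ≤ fderiv ℝ u z₁ (a - z₁) / R := by
        gcongr; exact le_fderiv_apply_of_forall_mul_le_of_eq_zero hdiff huz₁ fun τ hτ =>
          hu.half_center_mul_le_on_radius hR hpos hz₁ hτ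
    _ ≤ ‖fderiv ℝ u z₁‖ * ‖a - z₁‖ / R := by
        gcongr; exact (le_abs_self _).trans ((fderiv ℝ u z₁).le_opNorm _)
    _ = ‖fderiv ℝ u z₁‖ := by rw [norm_sub_rev, hz₁, mul_div_cancel_right₀ _ hR.ne']
end

section
/- (Hadamard three circles theorem for the minimum of a harmonic function.) Let u be harmonic on an open annulus {z ∈ ℂ : ρ₁ < |z − a| < ρ₂} and continuous on its closure, and set m(r) = min_{|z−a|=r} u(z). Then m is a concave function of log r: for all ρ₁ ≤ r₁ < r < r₂ ≤ ρ₂, m(r) ≥ [ m(r₁)·(log r₂ − log r) + m(r₂)·(log r − log r₁) ] / (log r₂ − log r₁). -/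
/-!
Choose `α, β` with `α + β log rᵢ = m rᵢ`. Since `log ‖z - a‖` is harmonic away from `a`,
`H = u - α - β log ‖z - a‖` is harmonic on the annulus `r₁ < ‖z - a‖ < r₂` and nonnegative on
its two boundary circles, hence nonnegative on the closed annulus by the minimum principle;
on the circle of radius `r` this reads `α + β log r ≤ m r`.

The minimum principle is proved by perturbation: `H - ε ‖z‖²` has negative Laplacian, while at an
interior local minimum every second directional derivative, hence the Laplacian, is nonnegative.
So its minimum over the closed annulus lies on the boundary, and `ε → 0` gives the claim.
-/

open Filter Topology Set InnerProductSpace Laplacian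

theorem IsLocalMin.deriv_deriv_nonneg {f : ℝ → ℝ} {x : ℝ} (hmin : IsLocalMin f x)
    (hc : ContinuousAt f x) : 0 ≤ deriv (deriv f) x := by
  by_contra! hneg
  -- By the second-derivative test `x` would also be a local maximum, so `f` is locally constant.
  have hconst : f =ᶠ[𝓝 x] fun _ => f x :=
    (hmin.and (isLocalMax_of_deriv_deriv_neg hneg hmin.deriv_eq_zero hc)).mono
      fun _ h => le_antisymm h.2 h.1
  have := hconst.deriv.deriv_eq
  simp_all

section NormedSpace

variable {E : Type*} [NormedAddCommGroup E] [NormedSpace ℝ E] {f : E → ℝ} {x : E}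

theorem ContDiffAt.deriv_deriv_apply_add_smul (hf : ContDiffAt ℝ 2 f x) (v : E) :
    deriv (deriv fun t : ℝ => f (x + t • v)) 0 = iteratedFDeriv ℝ 2 f x ![v, v] := by
  have hline (t : ℝ) : HasDerivAt (fun t : ℝ => x + t • v) v t := by
    simpa using ((hasDerivAt_id t).smul_const v).const_add x
  have htend : Tendsto (fun t : ℝ => x + t • v) (𝓝 0) (𝓝 x) := by
    simpa using (hline 0).continuousAt.tendsto
  have hdiff : ∀ᶠ y in 𝓝 x, DifferentiableAt ℝ f y :=
    (hf.eventually (by simp)).mono fun y hy => hy.differentiableAt (by simp)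
  have hderiv : deriv (fun t : ℝ => f (x + t • v)) =ᶠ[𝓝 0] fun t => fderiv ℝ f (x + t • v) v :=
    (htend.eventually hdiff).mono fun t ht => (ht.hasFDerivAt.comp_hasDerivAt t (hline t)).deriv
  have hf' : DifferentiableAt ℝ (fderiv ℝ f) x :=
    (hf.fderiv_right (m := 1) (by norm_num)).differentiableAt (by simp)
  have hderiv₂ := ((hf'.clm_apply (differentiableAt_const v)).hasFDerivAt.comp_hasDerivAt_of_eq
    (0 : ℝ) (hline 0) (by simp)).deriv
  rw [Function.comp_def] at hderiv₂
  rw [hderiv.deriv_eq, hderiv₂, iteratedFDeriv_two_apply,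
    fderiv_clm_apply hf' (differentiableAt_const v)]
  simp

theorem IsLocalMin.iteratedFDeriv_two_nonneg (hmin : IsLocalMin f x) (hf : ContDiffAt ℝ 2 f x)
    (v : E) : 0 ≤ iteratedFDeriv ℝ 2 f x ![v, v] := by
  have hline : Continuous fun t : ℝ => x + t • v := by fun_prop
  rw [← hf.deriv_deriv_apply_add_smul]
  refine IsLocalMin.deriv_deriv_nonneg ?_ ?_
  · exact IsLocalMin.comp_continuous (by simpa using hmin) hline.continuousAt
  · exact hf.continuousAt.comp_of_eq hline.continuousAt (by simp)

end NormedSpace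

section InnerProductSpace

variable {E : Type*} [NormedAddCommGroup E] [InnerProductSpace ℝ E] [FiniteDimensional ℝ E]
  {f : E → ℝ} {U K : Set E}

theorem IsLocalMin.laplacian_nonneg {x : E} (hmin : IsLocalMin f x) (hf : ContDiffAt ℝ 2 f x) :
    0 ≤ Δ f x := by
  rw [laplacian_eq_iteratedFDeriv_stdOrthonormalBasis]
  exact Finset.sum_nonneg fun i _ => hmin.iteratedFDeriv_two_nonneg hf _

theorem laplacian_norm_sq (x : E) :
    Δ (fun y : E => ‖y‖ ^ 2) x = 2 * Module.finrank ℝ E := by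
  have hfderiv : fderiv ℝ (fun y : E => ‖y‖ ^ 2) = fun y => 2 • innerSL ℝ y :=
    funext fun y => (hasStrictFDerivAt_norm_sq y).hasFDerivAt.fderiv
  have hfderiv₂ : fderiv ℝ (fun y : E => 2 • innerSL ℝ y) x = 2 • innerSL ℝ :=
    (2 • innerSL ℝ : E →L[ℝ] E →L[ℝ] ℝ).fderiv
  have hbasis (i) : innerSL ℝ (stdOrthonormalBasis ℝ E i) (stdOrthonormalBasis ℝ E i) = 1 := by
    rw [innerSL_apply_apply, real_inner_self_eq_norm_sq,
      (stdOrthonormalBasis ℝ E).orthonormal.1 i, one_pow]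
  simp [laplacian_eq_iteratedFDeriv_stdOrthonormalBasis, iteratedFDeriv_two_apply, hfderiv,
    hfderiv₂, hbasis, mul_comm]

theorem IsCompact.exists_isMinOn_mem_diff_of_laplacian_neg (hK : IsCompact K) (hne : K.Nonempty)
    (hU : IsOpen U) (hUK : U ⊆ K) (hf : ContinuousOn f K) (hf₂ : ∀ x ∈ U, ContDiffAt ℝ 2 f x)
    (hΔ : ∀ x ∈ U, Δ f x < 0) : ∃ x ∈ K \ U, IsMinOn f K x := by
  obtain ⟨x, hxK, hmin⟩ := hK.exists_isMinOn hne hf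
  refine ⟨x, ⟨hxK, fun hxU => ?_⟩, hmin⟩
  have hloc : IsLocalMin f x := hmin.isLocalMin (mem_of_superset (hU.mem_nhds hxU) hUK)
  exact (hΔ x hxU).not_ge (hloc.laplacian_nonneg (hf₂ x hxU))

theorem IsCompact.le_of_forall_mem_diff_le_of_laplacian_nonpos [Nontrivial E] (hK : IsCompact K)
    (hU : IsOpen U) (hUK : U ⊆ K) (hf : ContinuousOn f K) (hf₂ : ∀ x ∈ U, ContDiffAt ℝ 2 f x)
    (hΔ : ∀ x ∈ U, Δ f x ≤ 0) {c : ℝ} (hc : ∀ x ∈ K \ U, c ≤ f x) {x : E} (hx : x ∈ K) :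
    c ≤ f x := by
  obtain ⟨R, hR⟩ := hK.isBounded.exists_norm_le
  have hsq : ContDiff ℝ 2 fun y : E => ‖y‖ ^ 2 := contDiff_norm_sq ℝ
  refine le_of_forall_pos_le_add fun ε hε => ?_
  set δ := ε / (R ^ 2 + 1)
  have hδ : 0 < δ := by positivity
  have hδR : δ * R ^ 2 ≤ ε := by
    rw [div_mul_eq_mul_div, div_le_iff₀ (by positivity)]
    nlinarith
  have hδsq (y : E) : ContDiffAt ℝ 2 (δ • fun y : E => ‖y‖ ^ 2) y := hsq.contDiffAt.const_smul δ
  set g : E → ℝ := f - δ • fun y => ‖y‖ ^ 2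
  have hgΔ (y : E) (hy : y ∈ U) : Δ g y < 0 := by
    rw [(hf₂ y hy).laplacian_sub (hδsq y), laplacian_smul δ hsq.contDiffAt, laplacian_norm_sq,
      smul_eq_mul]
    have : (0 : ℝ) < Module.finrank ℝ E := by exact_mod_cast Module.finrank_pos
    nlinarith [hΔ y hy]
  obtain ⟨x₀, hx₀, hmin⟩ := hK.exists_isMinOn_mem_diff_of_laplacian_neg ⟨x, hx⟩ hU hUK
    (hf.sub (continuousOn_const.smul hsq.continuous.continuousOn))
    (fun y hy => (hf₂ y hy).sub (hδsq y)) hgΔ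
  have hgx : g x₀ ≤ g x := hmin hx
  have hx₀R : ‖x₀‖ ^ 2 ≤ R ^ 2 := pow_le_pow_left₀ (norm_nonneg _) (hR x₀ hx₀.1) 2
  simp only [g, Pi.sub_apply, Pi.smul_apply, smul_eq_mul] at hgx
  nlinarith [hc x₀ hx₀, sq_nonneg ‖x‖]

end InnerProductSpace

theorem laplacian_eq_fderiv_fderiv_complexPlane {F : Type*} [NormedAddCommGroup F]
    [NormedSpace ℝ F] {f : ℂ → F} {z : ℂ} (hf : ContDiffAt ℝ 2 f z) :
    Δ f z = fderiv ℝ (fun w => fderiv ℝ f w 1) z 1 +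
      fderiv ℝ (fun w => fderiv ℝ f w Complex.I) z Complex.I := by
  have hf' : DifferentiableAt ℝ (fderiv ℝ f) z :=
    (hf.fderiv_right (m := 1) (by norm_num)).differentiableAt (by simp)
  simp [laplacian_eq_iteratedFDeriv_complexPlane, iteratedFDeriv_two_apply,
    fderiv_clm_apply hf' (differentiableAt_const _)]

theorem IsOpen.harmonicOnNhd_of_fderiv_fderiv {F : Type*} [NormedAddCommGroup F]
    [NormedSpace ℝ F] {f : ℂ → F} {U : Set ℂ} (hU : IsOpen U) (hf : ContDiffOn ℝ 2 f U)
    (h : ∀ z ∈ U, fderiv ℝ (fun w => fderiv ℝ f w 1) z 1 +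
      fderiv ℝ (fun w => fderiv ℝ f w Complex.I) z Complex.I = 0) :
    HarmonicOnNhd f U := fun z hz =>
  ⟨hf.contDiffAt (hU.mem_nhds hz), eventually_of_mem (hU.mem_nhds hz) fun w hw => by
    rw [laplacian_eq_fderiv_fderiv_complexPlane (hf.contDiffAt (hU.mem_nhds hw)), h w hw]
    rfl⟩

theorem InnerProductSpace.HarmonicOnNhd.add_mul_log_norm_sub_le {u : ℂ → ℝ} {a : ℂ}
    {r₁ r₂ α β : ℝ} (hr₁ : 0 < r₁) (hu : HarmonicOnNhd u {z | r₁ < ‖z - a‖ ∧ ‖z - a‖ < r₂})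
    (hcont : ContinuousOn u {z | r₁ ≤ ‖z - a‖ ∧ ‖z - a‖ ≤ r₂})
    (h₁ : ∀ z, ‖z - a‖ = r₁ → α + β * Real.log r₁ ≤ u z)
    (h₂ : ∀ z, ‖z - a‖ = r₂ → α + β * Real.log r₂ ≤ u z)
    {z : ℂ} (hz₁ : r₁ ≤ ‖z - a‖) (hz₂ : ‖z - a‖ ≤ r₂) :
    α + β * Real.log ‖z - a‖ ≤ u z := by
  set U := {z : ℂ | r₁ < ‖z - a‖ ∧ ‖z - a‖ < r₂}
  set K := {z : ℂ | r₁ ≤ ‖z - a‖ ∧ ‖z - a‖ ≤ r₂}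
  set H : ℂ → ℝ := fun w => u w - (α + β * Real.log ‖w - a‖)
  have hnorm : Continuous fun w : ℂ => ‖w - a‖ := by fun_prop
  have hlog (w : ℂ) (hw : r₁ ≤ ‖w - a‖) : HarmonicAt (fun w => Real.log ‖w - a‖) w :=
    (analyticAt_id.sub analyticAt_const).harmonicAt_log_norm (norm_pos_iff.1 (hr₁.trans_le hw))
  have hH : HarmonicOnNhd H U := fun w hw =>
    (hu w hw).sub ((harmonicAt_const α).add ((hlog w hw.1.le).const_smul (c := β)))
  have hK : IsCompact K :=
    Metric.isCompact_of_isClosed_isBounded (isClosed_Icc.preimage hnorm)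
      (Metric.isBounded_closedBall (x := a) (r := r₂) |>.subset fun w hw => by
        simpa [dist_eq_norm] using hw.2)
  have hHK : ContinuousOn H K :=
    hcont.sub (continuousOn_const.add (continuousOn_const.mul fun w hw =>
      (hlog w hw.1).1.continuousAt.continuousWithinAt))
  have hbdry : ∀ w ∈ K \ U, 0 ≤ H w := by
    rintro w ⟨⟨hw₁, hw₂⟩, hwU⟩
    rcases hw₁.eq_or_lt with hw₁ | hw₁
    · simpa [H, ← hw₁] using h₁ w hw₁.symm
    · have hw₂ : ‖w - a‖ = r₂ := hw₂.eq_of_not_lt fun h => hwU ⟨hw₁, h⟩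
      simpa [H, hw₂] using h₂ w hw₂
  have := hK.le_of_forall_mem_diff_le_of_laplacian_nonpos (isOpen_Ioo.preimage hnorm)
    (fun w hw => ⟨hw.1.le, hw.2.le⟩) hHK (fun w hw => (hH w hw).1)
    (fun w hw => (hH w hw).2.self_of_nhds.le) hbdry ⟨hz₁, hz₂⟩
  simpa [H] using this

theorem hadamard_three_circles_min_general
    (a : ℂ) (ρ₁ ρ₂ : ℝ) (hρ₁ : 0 < ρ₁)
    (u : ℂ → ℝ)
    (hC2 : ContDiffOn ℝ 2 u
      {z : ℂ | ρ₁ < ‖z - a‖ ∧ ‖z - a‖ < ρ₂})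
    (hharm : ∀ z : ℂ, ρ₁ < ‖z - a‖ → ‖z - a‖ < ρ₂ →
      fderiv ℝ (fun w => fderiv ℝ u w 1) z 1 +
        fderiv ℝ (fun w => fderiv ℝ u w Complex.I) z Complex.I = 0)
    (hcont : ContinuousOn u
      {z : ℂ | ρ₁ ≤ ‖z - a‖ ∧ ‖z - a‖ ≤ ρ₂})
    (m : ℝ → ℝ) (hm : ∀ r, m r = sInf (u '' Metric.sphere a r))
    (r₁ r r₂ : ℝ) (h1 : ρ₁ ≤ r₁) (h2 : r₁ < r) (h3 : r < r₂) (h4 : r₂ ≤ ρ₂) :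
    (m r₁ * (Real.log r₂ - Real.log r) + m r₂ * (Real.log r - Real.log r₁)) /
        (Real.log r₂ - Real.log r₁) ≤ m r := by
  have hr₁ : 0 < r₁ := hρ₁.trans_le h1
  have hlog : Real.log r₂ - Real.log r₁ ≠ 0 := (sub_pos.2 (Real.log_lt_log hr₁ (h2.trans h3))).ne'
  have hu : HarmonicOnNhd u {z | r₁ < ‖z - a‖ ∧ ‖z - a‖ < r₂} :=
    (IsOpen.harmonicOnNhd_of_fderiv_fderiv (isOpen_Ioo.preimage (by fun_prop)) hC2
      fun z hz => hharm z hz.1 hz.2).mono fun z hz => ⟨h1.trans_lt hz.1, hz.2.trans_le h4⟩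
  have hm_le (s : ℝ) (hs₁ : ρ₁ ≤ s) (hs₂ : s ≤ ρ₂) (z : ℂ) (hz : ‖z - a‖ = s) : m s ≤ u z := by
    rw [hm]
    exact csInf_le ((isCompact_sphere a s).image_of_continuousOn
      (hcont.mono fun w hw => by simp_all)).bddBelow ⟨z, by simpa [dist_eq_norm] using hz, rfl⟩
  set β := (m r₂ - m r₁) / (Real.log r₂ - Real.log r₁)
  set α := m r₁ - β * Real.log r₁
  have hα₂ : α + β * Real.log r₂ = m r₂ := by simp only [α, β]; field_simp; ring
  have hbound (z : ℂ) (hz : ‖z - a‖ = r) : α + β * Real.log r ≤ u z :=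
    hz ▸ hu.add_mul_log_norm_sub_le hr₁ (hcont.mono fun w hw => ⟨h1.trans hw.1, hw.2.trans h4⟩)
      (fun w hw => by simpa [α] using hm_le r₁ h1 (by linarith) w hw)
      (fun w hw => hα₂ ▸ hm_le r₂ (by linarith) h4 w hw) (hz ▸ h2.le) (hz ▸ h3.le)
  calc (m r₁ * (Real.log r₂ - Real.log r) + m r₂ * (Real.log r - Real.log r₁)) /
        (Real.log r₂ - Real.log r₁) = α + β * Real.log r := by
        simp only [α, β]; field_simp; ring
    _ ≤ m r := hm r ▸ le_csInf ((NormedSpace.sphere_nonempty.2 (hr₁.trans h2).le).image u)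
        fun _ ⟨z, hz, hzu⟩ => hzu ▸ hbound z (mem_sphere_iff_norm.1 hz)

/-- Hadamard three circles theorem for the minimum of a harmonic function:
if `u` is harmonic on the open annulus `{ρ₁ < |z − a| < ρ₂}` and continuous on
its closure, then `m(r) = min_{|z−a|=r} u(z)` is a concave function of `log r`. -/
theorem hadamard_three_circles_min
    (a : ℂ) (ρ₁ ρ₂ : ℝ) (hρ₁ : 0 < ρ₁) (hρ : ρ₁ < ρ₂)
    (u : ℂ → ℝ)
    (hC2 : ContDiffOn ℝ 2 u
      {z : ℂ | ρ₁ < ‖z - a‖ ∧ ‖z - a‖ < ρ₂})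
    (hharm : ∀ z : ℂ, ρ₁ < ‖z - a‖ → ‖z - a‖ < ρ₂ →
      fderiv ℝ (fun w => fderiv ℝ u w 1) z 1 +
        fderiv ℝ (fun w => fderiv ℝ u w Complex.I) z Complex.I = 0)
    (hcont : ContinuousOn u
      {z : ℂ | ρ₁ ≤ ‖z - a‖ ∧ ‖z - a‖ ≤ ρ₂})
    (m : ℝ → ℝ) (hm : ∀ r, m r = sInf (u '' Metric.sphere a r))
    (r₁ r r₂ : ℝ) (h1 : ρ₁ ≤ r₁) (h2 : r₁ < r) (h3 : r < r₂) (h4 : r₂ ≤ ρ₂) :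
    (m r₁ * (Real.log r₂ - Real.log r) + m r₂ * (Real.log r - Real.log r₁)) /
        (Real.log r₂ - Real.log r₁) ≤ m r :=
  hadamard_three_circles_min_general a ρ₁ ρ₂ hρ₁ u hC2 hharm hcont m hm r₁ r r₂ h1 h2 h3 h4
end

section
/- Let n ≥ 1 and let f₀, …, fₙ : ℂ → ℂ be entire functions with no common zero, with spherical derivative ‖f′‖²(z) = (∑ⱼ |fⱼ(z)|²)⁻² ∑_{i≠j} |fᵢ′fⱼ − fᵢfⱼ′|²(z). Let z₁ ∈ ℂ and k ∈ {1, …, n} be such that f₀(z₁) ≠ 0 and |f₀(z₁)| = |f_k(z₁)| ≥ |fⱼ(z₁)| for every j ∈ {1, …, n}. Then ‖f′‖(z₁) ≥ (n+1)⁻¹ · | f₀′(z₁)/f₀(z₁) − f_k′(z₁)/f_k(z₁) |. -/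
/-!
Since `|f₀(z₁)| = |f_k(z₁)|`, the difference of logarithmic derivatives is the Wronskian
`W = f₀′f_k − f₀f_k′` divided by `|f₀(z₁)|²`. Dropping all but the `(0, k)` term of the
spherical derivative gives `‖f′‖ ≥ |W| / ∑ⱼ |fⱼ|²`, and the maximality of `|f₀(z₁)|` bounds
`∑ⱼ |fⱼ|² ≤ (n + 1) |f₀(z₁)|²`.
-/

/-- Squared spherical derivative of the holomorphic curve with homogeneous
representation `f = (f 0, …, f n) : ℂ → ℙⁿ`. -/
noncomputable def sphD2 (n : ℕ) (f : Fin (n + 1) → ℂ → ℂ) (z : ℂ) : ℝ :=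
  ((∑ j, ‖f j z‖ ^ 2) ^ 2)⁻¹ *
    ∑ i, ∑ j, if i ≠ j then
      ‖deriv (f i) z * f j z - f i z * deriv (f j) z‖ ^ 2 else 0

open Finset

lemma norm_div_sub_div_eq {a a' b b' : ℂ} (ha : a ≠ 0) (hb : b ≠ 0) :
    ‖a' / a - b' / b‖ = ‖a' * b - a * b'‖ / (‖a‖ * ‖b‖) := by
  rw [div_sub_div _ _ ha hb, norm_div, norm_mul]

lemma sum_sq_norm_le_card_mul {ι E : Type*} [Fintype ι] [SeminormedAddCommGroup E]
    (g : ι → E) (i₀ : ι)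
    (hmax : ∀ j, j ≠ i₀ → ‖g j‖ ≤ ‖g i₀‖) :
    ∑ j, ‖g j‖ ^ 2 ≤ Fintype.card ι * ‖g i₀‖ ^ 2 := by
  rw [← nsmul_eq_mul]
  refine sum_le_card_nsmul _ _ _ fun j _ => ?_
  rcases eq_or_ne j i₀ with rfl | hj
  · rfl
  · exact pow_le_pow_left₀ (norm_nonneg _) (hmax j hj) 2

lemma sq_norm_le_sum_sq_norm {ι E : Type*} [Fintype ι] [SeminormedAddCommGroup E]
    (g : ι → E) (i : ι) :
    ‖g i‖ ^ 2 ≤ ∑ j, ‖g j‖ ^ 2 :=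
  single_le_sum (fun j _ => sq_nonneg ‖g j‖) (mem_univ i)

lemma div_sum_sq_norm_le_sqrt_sphD2 {n : ℕ} (f : Fin (n + 1) → ℂ → ℂ) (z : ℂ)
    {i j : Fin (n + 1)} (hij : i ≠ j) :
    ‖deriv (f i) z * f j z - f i z * deriv (f j) z‖ / ∑ l, ‖f l z‖ ^ 2
      ≤ Real.sqrt (sphD2 n f z) := by
  refine Real.le_sqrt_of_sq_le ?_
  rw [div_pow, div_eq_inv_mul, sphD2]
  gcongr
  set W : Fin (n + 1) → Fin (n + 1) → ℝ := fun i' j' =>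
    if i' ≠ j' then ‖deriv (f i') z * f j' z - f i' z * deriv (f j') z‖ ^ 2 else 0
  have hW : ∀ i' j', 0 ≤ W i' j' := fun _ _ => by positivity
  calc ‖deriv (f i) z * f j z - f i z * deriv (f j) z‖ ^ 2
      = W i j := by simp [W, hij]
    _ ≤ ∑ j', W i j' := single_le_sum (fun j' _ => hW i j') (mem_univ j)
    _ ≤ ∑ i', ∑ j', W i' j' :=
      single_le_sum (fun i' _ => sum_nonneg fun j' _ => hW i' j') (mem_univ i)

theorem spherical_derivative_log_derivative_bound_general
    (n : ℕ) (f : Fin (n + 1) → ℂ → ℂ)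
    (z₁ : ℂ) (k : Fin (n + 1)) (hk : k ≠ 0)
    (h0 : f 0 z₁ ≠ 0)
    (heq : ‖f 0 z₁‖ = ‖f k z₁‖)
    (hmax : ∀ j : Fin (n + 1), j ≠ 0 → ‖f j z₁‖ ≤ ‖f 0 z₁‖) :
    ((n : ℝ) + 1)⁻¹ *
        ‖deriv (f 0) z₁ / f 0 z₁ - deriv (f k) z₁ / f k z₁‖
      ≤ Real.sqrt (sphD2 n f z₁) := by
  have hk₁ : f k z₁ ≠ 0 := norm_ne_zero_iff.mp (heq ▸ norm_ne_zero_iff.mpr h0)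
  have hS_pos : 0 < ∑ j, ‖f j z₁‖ ^ 2 :=
    (pow_pos (norm_pos_iff.mpr h0) 2).trans_le (sq_norm_le_sum_sq_norm (f · z₁) 0)
  have hS_le : ∑ j, ‖f j z₁‖ ^ 2 ≤ ((n : ℝ) + 1) * ‖f 0 z₁‖ ^ 2 := by
    simpa using sum_sq_norm_le_card_mul (f · z₁) 0 hmax
  calc ((n : ℝ) + 1)⁻¹ * ‖deriv (f 0) z₁ / f 0 z₁ - deriv (f k) z₁ / f k z₁‖
      = ‖deriv (f 0) z₁ * f k z₁ - f 0 z₁ * deriv (f k) z₁‖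
          / (((n : ℝ) + 1) * ‖f 0 z₁‖ ^ 2) := by
        rw [norm_div_sub_div_eq h0 hk₁, ← heq, ← sq, inv_mul_eq_div, div_div,
          mul_comm (‖f 0 z₁‖ ^ 2)]
    _ ≤ ‖deriv (f 0) z₁ * f k z₁ - f 0 z₁ * deriv (f k) z₁‖ / ∑ j, ‖f j z₁‖ ^ 2 :=
        div_le_div_of_nonneg_left (norm_nonneg _) hS_pos hS_le
    _ ≤ Real.sqrt (sphD2 n f z₁) := div_sum_sq_norm_le_sqrt_sphD2 f z₁ hk.symm

/-- If `|f₀(z₁)| = |f_k(z₁)| ≥ |fⱼ(z₁)|` for all `j ∈ {1,…,n}` and `f₀(z₁) ≠ 0`,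
then `‖f′‖(z₁) ≥ (n+1)⁻¹ |f₀′(z₁)/f₀(z₁) − f_k′(z₁)/f_k(z₁)|`. -/
theorem spherical_derivative_log_derivative_bound
    (n : ℕ) (hn : 1 ≤ n) (f : Fin (n + 1) → ℂ → ℂ)
    (hent : ∀ j, Differentiable ℂ (f j))
    (hnz : ∀ z : ℂ, ∃ j, f j z ≠ 0)
    (z₁ : ℂ) (k : Fin (n + 1)) (hk : k ≠ 0)
    (h0 : f 0 z₁ ≠ 0)
    (heq : ‖f 0 z₁‖ = ‖f k z₁‖)
    (hmax : ∀ j : Fin (n + 1), j ≠ 0 → ‖f j z₁‖ ≤ ‖f 0 z₁‖) :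
    ((n : ℝ) + 1)⁻¹ *
        ‖deriv (f 0) z₁ / f 0 z₁ - deriv (f k) z₁ / f k z₁‖
      ≤ Real.sqrt (sphD2 n f z₁) :=
  spherical_derivative_log_derivative_bound_general n f z₁ k hk h0 heq hmax
end
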